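/- Let 1 < p ≤ 2. There exists a constant C > 0 such that for every measurable kernel K : (0,1/2] × [1,∞) → ℂ satisfying |K(t,r)| ≤ t^{−(α+1/2)} e^{−ρr} r^{−1} for all 0 < t ≤ 1/2 and r ≥ 1, and every f ∈ L^p((0,∞),dμ), one has ( ∫₀^{1/2} | ∫₁^∞ K(t,r) f(r) Δ(r) dr |^p Δ(t) dt )^{1/p} ≤ C ‖f‖_{L^p((0,∞),dμ)}. -/

import Mathlib

open MeasureTheory Real Set
open scoped ENNReal NNReal

/-- The Jacobi weight `Δ(t) = (2 sinh t)^(2α+1) (2 cosh t)^(2β+1)`. -/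
noncomputable def Δj (α β : ℝ) (t : ℝ) : ℝ :=
  (2 * Real.sinh t) ^ (2 * α + 1) * (2 * Real.cosh t) ^ (2 * β + 1)

/-- The measure `dμ = Δ(t) dt`. -/
noncomputable def μj (α β : ℝ) : Measure ℝ :=
  MeasureTheory.volume.withDensity fun t => ENNReal.ofReal (Δj α β t)

/-!
Dominate the kernel by a product: `‖K t r‖ ≤ a t * b r` with `a t = t^(-(α+1/2))` and
`b r = e^(-ρr) / r`. Hölder's inequality in `r` (with respect to `μ` on `[1, ∞)`) bounds the inner
integral by `a t * ‖b‖_q * ‖f‖_p`, where `q` is the conjugate exponent, and taking the `L^p(μ)` norm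
in `t` over `(0, 1/2]` gives the estimate with `C = ‖a‖_p ‖b‖_q`. Both norms are finite: near `0`,
`Δ(t) ≲ t^(2α+1)` and `(α+1/2) p ≤ 2α+1` because `p ≤ 2`; near `∞`, `Δ(r) ≲ e^(2ρr)` is absorbed
by `e^(-ρqr)` because `q ≥ 2`, leaving the integrable `r^(-q)`.
-/

theorem enorm_mul_le_of_norm_le_mul {E : Type*} [NormedRing E] {x y : E} {a b : ℝ}
    (h : ‖x‖ ≤ a * b) : ‖x * y‖ₑ ≤ ‖a‖ₑ * (‖b‖ₑ * ‖y‖ₑ) := by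
  rw [← enorm_norm y, ← enorm_mul, ← enorm_mul, enorm_le_iff_norm_le]
  calc ‖x * y‖ ≤ ‖x‖ * ‖y‖ := norm_mul_le x y
    _ ≤ |a * b| * ‖y‖ := by gcongr; exact h.trans (le_abs_self _)
    _ = ‖a * (b * ‖y‖)‖ := by simp [abs_mul, mul_assoc]

section KernelBound

variable {T R E : Type*} [MeasurableSpace T] [MeasurableSpace R] [NormedRing E]
  [NormedSpace ℝ E] {μ : Measure T} {ν : Measure R}

theorem eLpNorm_integral_mul_le_of_norm_le_mul {p q : ℝ≥0∞} [p.HolderConjugate q]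
    {K : T → R → E} {f : R → E} {a : T → ℝ} {b : R → ℝ}
    (ha : AEStronglyMeasurable a μ) (hb : AEStronglyMeasurable b ν)
    (hf : AEStronglyMeasurable f ν) (hK : ∀ᵐ t ∂μ, ∀ᵐ r ∂ν, ‖K t r‖ ≤ a t * b r) :
    eLpNorm (fun t => ∫ r, K t r * f r ∂ν) p μ ≤
      eLpNorm a p μ * eLpNorm b q ν * eLpNorm f p ν := by
  set c := eLpNorm b q ν * eLpNorm f p ν
  have holder : ∫⁻ r, ‖b r‖ₑ * ‖f r‖ₑ ∂ν ≤ c := by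
    simpa [eLpNorm_one_eq_lintegral_enorm, enorm_smul] using
      eLpNorm_smul_le_mul_eLpNorm (p := q) (q := p) (r := 1) hf hb
  have pointwise : ∀ᵐ t ∂μ, ‖∫ r, K t r * f r ∂ν‖ₑ ≤ c * ‖a t‖ₑ := by
    filter_upwards [hK] with t ht
    calc ‖∫ r, K t r * f r ∂ν‖ₑ ≤ ∫⁻ r, ‖K t r * f r‖ₑ ∂ν :=
          enorm_integral_le_lintegral_enorm _
      _ ≤ ∫⁻ r, ‖a t‖ₑ * (‖b r‖ₑ * ‖f r‖ₑ) ∂ν :=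
        lintegral_mono_ae (ht.mono fun r hr => enorm_mul_le_of_norm_le_mul hr)
      _ = ‖a t‖ₑ * ∫⁻ r, ‖b r‖ₑ * ‖f r‖ₑ ∂ν :=
        lintegral_const_mul' _ _ enorm_ne_top
      _ ≤ c * ‖a t‖ₑ := by rw [mul_comm]; gcongr
  calc _ ≤ c * eLpNorm a p μ := eLpNorm_le_mul_eLpNorm_of_ae_le_mul'' p ha pointwise
    _ = _ := by rw [mul_comm, mul_assoc]

end KernelBound

section Jacobi

variable {α β : ℝ}

@[fun_prop]
theorem measurable_Δj (α β : ℝ) : Measurable (Δj α β) := by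
  unfold Δj; fun_prop

theorem Δj_pos {t : ℝ} (ht : 0 < t) : 0 < Δj α β t := by
  have hs : 0 < 2 * sinh t := by have := sinh_pos_iff.mpr ht; linarith
  exact mul_pos (rpow_pos_of_pos hs _) (rpow_pos_of_pos (by positivity) _)

theorem two_mul_sinh_le {t : ℝ} (ht0 : 0 ≤ t) (ht : t ≤ 1 / 2) : 2 * sinh t ≤ 4 * t := by
  -- `exp t = (exp (-t))⁻¹ ≤ (1 - t)⁻¹ ≤ 1 + 2 t` on `[0, 1/2]`
  have hinv : exp t * exp (-t) = 1 := by rw [← exp_add]; simp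
  have hlow : 1 - t ≤ exp (-t) := by linarith [add_one_le_exp (-t)]
  rw [sinh_eq]
  nlinarith [exp_pos (-t), exp_pos t]

theorem two_mul_cosh_le {t : ℝ} (ht0 : 0 ≤ t) (ht : t ≤ 1 / 2) : 2 * cosh t ≤ 4 := by
  have hinv : exp t * exp (-t) = 1 := by rw [← exp_add]; simp
  have hlow : 1 - t ≤ exp (-t) := by linarith [add_one_le_exp (-t)]
  have hup : exp (-t) ≤ 1 := exp_le_one_iff.mpr (by linarith)
  rw [cosh_eq]
  nlinarith [exp_pos (-t), exp_pos t]

theorem Δj_le_mul_rpow (hα : 0 ≤ 2 * α + 1) (hβ : 0 ≤ 2 * β + 1) {t : ℝ} (ht0 : 0 < t)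
    (ht : t ≤ 1 / 2) : Δj α β t ≤ 4 ^ (2 * (α + β + 1)) * t ^ (2 * α + 1) := by
  have hs : 0 ≤ 2 * sinh t := by have := sinh_pos_iff.mpr ht0; linarith
  calc Δj α β t ≤ (4 * t) ^ (2 * α + 1) * 4 ^ (2 * β + 1) :=
        mul_le_mul (rpow_le_rpow hs (two_mul_sinh_le ht0.le ht) hα)
          (rpow_le_rpow (by positivity) (two_mul_cosh_le ht0.le ht) hβ) (by positivity)
          (by positivity)
    _ = 4 ^ (2 * (α + β + 1)) * t ^ (2 * α + 1) := by
        rw [mul_rpow (by norm_num) ht0.le,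
          show 2 * (α + β + 1) = 2 * α + 1 + (2 * β + 1) by ring,
          rpow_add (by norm_num : (0 : ℝ) < 4) (2 * α + 1) (2 * β + 1)]
        ring

theorem Δj_le_mul_exp (hα : 0 ≤ 2 * α + 1) (hβ : 0 ≤ 2 * β + 1) {r : ℝ} (hr : 0 ≤ r) :
    Δj α β r ≤ 2 ^ (2 * (α + β + 1)) * exp (2 * (α + β + 1) * r) := by
  have hs : 0 ≤ 2 * sinh r := by have := sinh_nonneg_iff.mpr hr; linarith
  have hcosh : cosh r ≤ exp r := by
    rw [cosh_eq]; linarith [exp_le_exp.mpr (by linarith : -r ≤ r)]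
  calc Δj α β r ≤ (2 * exp r) ^ (2 * α + 1) * (2 * exp r) ^ (2 * β + 1) :=
        mul_le_mul (rpow_le_rpow hs (by linarith [sinh_lt_cosh r]) hα)
          (rpow_le_rpow (by positivity) (by linarith) hβ) (by positivity) (by positivity)
    _ = 2 ^ (2 * (α + β + 1)) * exp (2 * (α + β + 1) * r) := by
        rw [← rpow_add (by positivity), mul_rpow (by norm_num) (exp_pos r).le, ← exp_mul]
        ring_nf

theorem integrableOn_rpow_mul_Δj_Ioc (hα : 0 ≤ 2 * α + 1) (hβ : 0 ≤ 2 * β + 1) {s : ℝ}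
    (hs : -(2 * α + 2) < s) : IntegrableOn (fun t => t ^ s * Δj α β t) (Ioc 0 (1 / 2)) := by
  have hbound : IntegrableOn (fun t => (4 : ℝ) ^ (2 * (α + β + 1)) * t ^ (s + (2 * α + 1)))
      (Ioc 0 (1 / 2)) :=
    ((intervalIntegrable_iff_integrableOn_Ioc_of_le (by norm_num)).mp
      (intervalIntegral.intervalIntegrable_rpow' (by linarith))).const_mul _
  refine hbound.mono' (Measurable.aestronglyMeasurable (by fun_prop))
    (ae_restrict_of_forall_mem measurableSet_Ioc fun t ht => ?_)
  rw [Real.norm_of_nonneg (mul_nonneg (rpow_nonneg ht.1.le _) (Δj_pos ht.1).le),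
    rpow_add ht.1]
  calc t ^ s * Δj α β t ≤ t ^ s * (4 ^ (2 * (α + β + 1)) * t ^ (2 * α + 1)) :=
        mul_le_mul_of_nonneg_left (Δj_le_mul_rpow hα hβ ht.1 ht.2) (rpow_nonneg ht.1.le _)
    _ = _ := by ring

theorem integrableOn_exp_mul_rpow_mul_Δj_Ici (hα : 0 ≤ 2 * α + 1) (hβ : 0 ≤ 2 * β + 1)
    {c s : ℝ} (hc : 2 * (α + β + 1) ≤ c) (hs : s < -1) :
    IntegrableOn (fun r => exp (-c * r) * r ^ s * Δj α β r) (Ici 1) := by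
  have hbound : IntegrableOn (fun r => (2 : ℝ) ^ (2 * (α + β + 1)) * r ^ s) (Ici 1) :=
    ((integrableOn_Ioi_rpow_of_lt hs one_pos).congr_set_ae Ioi_ae_eq_Ici.symm).const_mul _
  refine hbound.mono' (Measurable.aestronglyMeasurable (by fun_prop))
    (ae_restrict_of_forall_mem measurableSet_Ici fun r hr => ?_)
  have hr0 : 0 < r := one_pos.trans_le hr
  rw [Real.norm_of_nonneg (by have := (Δj_pos (α := α) (β := β) hr0).le; positivity)]
  have hexp : exp (-c * r) * exp (2 * (α + β + 1) * r) ≤ 1 := by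
    rw [← exp_add, exp_le_one_iff]; nlinarith
  calc exp (-c * r) * r ^ s * Δj α β r
      ≤ exp (-c * r) * r ^ s * (2 ^ (2 * (α + β + 1)) * exp (2 * (α + β + 1) * r)) := by
        gcongr; exact Δj_le_mul_exp hα hβ hr0.le
    _ = 2 ^ (2 * (α + β + 1)) * r ^ s * (exp (-c * r) * exp (2 * (α + β + 1) * r)) := by ring
    _ ≤ 2 ^ (2 * (α + β + 1)) * r ^ s * 1 := by gcongr
    _ = _ := mul_one _

theorem eLpNorm_restrict_μj {E : Type*} [NormedAddCommGroup E] {s : Set ℝ}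
    (hs : MeasurableSet s) {p : ℝ} (hp : 0 < p) (g : ℝ → E) :
    eLpNorm g (ENNReal.ofReal p) ((μj α β).restrict s) =
      (∫⁻ t in s, ENNReal.ofReal (‖g t‖ ^ p * Δj α β t)) ^ (1 / p) := by
  rw [eLpNorm_eq_lintegral_rpow_enorm_toReal (by simpa using hp) ENNReal.ofReal_ne_top,
    ENNReal.toReal_ofReal hp.le, μj, restrict_withDensity hs,
    lintegral_withDensity_eq_lintegral_mul_non_measurable _ (measurable_Δj α β).ennreal_ofReal
      (ae_of_all _ fun _ => ENNReal.ofReal_lt_top)]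
  congr 1
  refine lintegral_congr fun t => ?_
  rw [Pi.mul_apply, ENNReal.ofReal_mul (by positivity),
    ← ENNReal.ofReal_rpow_of_nonneg (norm_nonneg _) hp.le, ofReal_norm, mul_comm]

theorem eLpNorm_restrict_μj_ne_top {E : Type*} [NormedAddCommGroup E] {s : Set ℝ}
    (hs : MeasurableSet s) {p : ℝ} (hp : 0 < p) {g : ℝ → E}
    (hg : IntegrableOn (fun t => ‖g t‖ ^ p * Δj α β t) s) :
    eLpNorm g (ENNReal.ofReal p) ((μj α β).restrict s) ≠ ⊤ := by
  rw [eLpNorm_restrict_μj hs hp]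
  exact ENNReal.rpow_ne_top_of_nonneg (by positivity) hg.lintegral_lt_top.ne

theorem eLpNorm_rpow_restrict_Ioc_ne_top (hα : 0 ≤ 2 * α + 1) (hβ : 0 ≤ 2 * β + 1) {c p : ℝ}
    (hp : 0 < p) (hcp : -(2 * α + 2) < c * p) :
    eLpNorm (fun t => t ^ c) (ENNReal.ofReal p) ((μj α β).restrict (Ioc 0 (1 / 2))) ≠ ⊤ := by
  refine eLpNorm_restrict_μj_ne_top measurableSet_Ioc hp
    ((integrableOn_rpow_mul_Δj_Ioc hα hβ hcp).congr_fun (fun t ht => ?_) measurableSet_Ioc)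
  simp only [Real.norm_of_nonneg (rpow_nonneg ht.1.le _), ← rpow_mul ht.1.le]

theorem eLpNorm_exp_mul_inv_restrict_Ici_ne_top (hα : 0 ≤ 2 * α + 1) (hβ : 0 ≤ 2 * β + 1)
    {c q : ℝ} (hq : 1 < q) (hcq : 2 * (α + β + 1) ≤ c * q) :
    eLpNorm (fun r => exp (-c * r) * r⁻¹) (ENNReal.ofReal q) ((μj α β).restrict (Ici 1)) ≠ ⊤ := by
  refine eLpNorm_restrict_μj_ne_top measurableSet_Ici (by linarith)
    ((integrableOn_exp_mul_rpow_mul_Δj_Ici hα hβ hcq (s := -q) (by linarith)).congr_fun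
      (fun r hr => ?_) measurableSet_Ici)
  have hr0 : 0 < r := one_pos.trans_le hr
  simp only [Real.norm_of_nonneg (by positivity : 0 ≤ exp (-c * r) * r⁻¹),
    mul_rpow (exp_pos _).le (inv_nonneg.mpr hr0.le), ← exp_mul, inv_rpow hr0.le,
    rpow_neg hr0.le]
  ring_nf

-- Off `Ioi 0` the real powers in `Δj` may be negative, while the density of `μj` is clipped
-- at `0`.
theorem setIntegral_mul_Δj {𝕜 : Type*} [RCLike 𝕜] {s : Set ℝ} (hs : MeasurableSet s)
    (hs0 : s ⊆ Ioi 0) (g : ℝ → 𝕜) :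
    ∫ r in s, g r * (Δj α β r : 𝕜) = ∫ r, g r ∂(μj α β).restrict s := by
  rw [μj, show (fun t => ENNReal.ofReal (Δj α β t)) = fun t => ((Δj α β t).toNNReal : ℝ≥0∞)
      from rfl, setIntegral_withDensity_eq_setIntegral_smul (measurable_Δj α β).real_toNNReal _ hs]
  refine setIntegral_congr_fun hs fun r hr => ?_
  rw [NNReal.smul_def, Real.coe_toNNReal _ (Δj_pos (hs0 hr)).le, RCLike.real_smul_eq_coe_mul,
    mul_comm]

end Jacobi

theorem stmt14 (α β : ℝ) (hβα : β < α) (hβ : -(1/2 : ℝ) < β)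
    (p : ℝ) (hp1 : 1 < p) (hp2 : p ≤ 2) :
    ∃ C : ℝ, 0 < C ∧
      ∀ K : ℝ → ℝ → ℂ, Measurable (Function.uncurry K) →
        (∀ t r : ℝ, t ∈ Set.Ioc (0 : ℝ) (1/2) → 1 ≤ r →
          ‖K t r‖ ≤ t ^ (-(α + 1/2)) * Real.exp (-(α + β + 1) * r) * r⁻¹) →
        ∀ f : ℝ → ℂ,
          MemLp f (ENNReal.ofReal p) ((μj α β).restrict (Set.Ioi 0)) →
          (∫⁻ t in Set.Ioc (0 : ℝ) (1/2),
              ENNReal.ofReal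
                (‖∫ r in Set.Ici (1 : ℝ), K t r * f r * ((Δj α β r : ℝ) : ℂ)‖ ^ p *
                  Δj α β t)) ^ (1 / p) ≤
            ENNReal.ofReal C *
              eLpNorm f (ENNReal.ofReal p) ((μj α β).restrict (Set.Ioi 0)) := by
  have hα : 0 ≤ 2 * α + 1 := by linarith
  have hβ' : 0 ≤ 2 * β + 1 := by linarith
  have hp0 : 0 < p := by linarith
  set q := p.conjExponent
  have hpq : p.HolderConjugate q := .conjExponent hp1
  have := hpq.ennrealOfReal
  have hq2 : 2 ≤ q := by
    rw [show q = p / (p - 1) from rfl, le_div_iff₀ (by linarith)]; linarith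
  set μ := (μj α β).restrict (Ioc 0 (1 / 2))
  set ν := (μj α β).restrict (Ici 1)
  set A := eLpNorm (fun t : ℝ => t ^ (-(α + 1 / 2))) (ENNReal.ofReal p) μ
  set B := eLpNorm (fun r => exp (-(α + β + 1) * r) * r⁻¹) (ENNReal.ofReal q) ν
  have hAB : A * B ≠ ⊤ := ENNReal.mul_ne_top
    (eLpNorm_rpow_restrict_Ioc_ne_top hα hβ' hp0 (by nlinarith))
    (eLpNorm_exp_mul_inv_restrict_Ici_ne_top hα hβ' hpq.symm.lt (by nlinarith))
  refine ⟨(A * B).toReal + 1, by positivity, fun K _ hK f hf => ?_⟩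
  have hν : ν ≤ (μj α β).restrict (Ioi 0) :=
    Measure.restrict_mono (Ici_subset_Ioi.2 one_pos) le_rfl
  have hF (t : ℝ) : ∫ r in Ici 1, K t r * f r * (Δj α β r : ℂ) = ∫ r, K t r * f r ∂ν :=
    setIntegral_mul_Δj measurableSet_Ici (Ici_subset_Ioi.2 one_pos) _
  calc _ = eLpNorm (fun t => ∫ r, K t r * f r ∂ν) (ENNReal.ofReal p) μ := by
        rw [eLpNorm_restrict_μj measurableSet_Ioc hp0]
        exact congrArg (· ^ (1 / p)) (lintegral_congr fun t => by rw [hF t])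
    _ ≤ A * B * eLpNorm f _ ν :=
        eLpNorm_integral_mul_le_of_norm_le_mul (by fun_prop) (by fun_prop) (hf.1.mono_measure hν)
          (ae_restrict_of_forall_mem measurableSet_Ioc fun t ht =>
            ae_restrict_of_forall_mem measurableSet_Ici fun r hr =>
              (hK t r ht hr).trans_eq (by ring))
    _ ≤ _ := by
        gcongr
        exact (ENNReal.le_ofReal_iff_toReal_le hAB (by positivity)).2 (by linarith)
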